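/- arXiv:2308.08735 — 2 statements merged into one kernel-verified Lean document; each statement's English description precedes it below -/
import Mathlib

section
/- Let f : ℝⁿ → ℝ ∪ {∞} be proper, lower semicontinuous and prox-bounded with threshold λ_f, let λ ∈ (0, λ_f), and let x̄ ∈ dom f with 0 ∈ ∂(e_λ f)(x̄). If f satisfies the level-set subdifferential error bound at x̄ with exponent γ > 0 and constant μ > 0, then the Moreau envelope e_λ f satisfies the level-set subdifferential error bound at x̄ with exponent max{1, γ} and constant λ (1 + (μ/λ)^{1/γ})^{max{1,γ}}. -/
/-!
A Fréchet subgradient `v` of `e_λ f` at `y` is `λ⁻¹ (y - p)` for a proximal point `p` of `y`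
(one exists because `λ < λ_f` makes the proximal objective coercive), so `p = y - λ v`, `v` is a
Fréchet subgradient of `f` at `p`, and `f p ≤ e_λ f y`. The error bound of `f` at `p` then gives
`d(y, [f ≤ f x̄]) ≤ λ ‖v‖ + (μ ‖v‖)^(1/γ)`, which passes to limiting subgradients because both
sides are continuous. Criticality of `x̄` and lower semicontinuity of `f` give
`e_λ f x̄ = f x̄`, so `[f ≤ f x̄] ⊆ [e_λ f ≤ e_λ f x̄]`. For small `‖v‖` the elementary inequality
`(t + (c t)^(1/γ))^max(1,γ) ≤ (1 + c^(1/γ))^max(1,γ) t` on `[0, 1]` produces the constant; large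
`‖v‖` are absorbed by shrinking the neighbourhood of `x̄`.
-/

open Filter Topology Set
open scoped ENNReal NNReal RealInnerProductSpace

noncomputable section

variable {E : Type*} [NormedAddCommGroup E] [InnerProductSpace ℝ E]

/-- Fréchet (regular) subdifferential of an `EReal`-valued function. -/
def fsubd (f : E → EReal) (x : E) : Set E :=
  {v | f x ≠ ⊤ ∧ f x ≠ ⊥ ∧ ∀ ε : ℝ, 0 < ε → ∀ᶠ y in 𝓝 x,
      (((f x).toReal + inner ℝ v (y - x) - ε * ‖y - x‖ : ℝ) : EReal) ≤ f y}

/-- Limiting (Mordukhovich) subdifferential. -/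
def lsubd (f : E → EReal) (x : E) : Set E :=
  {v | ∃ xs vs : ℕ → E, Tendsto xs atTop (𝓝 x) ∧
      Tendsto (fun k => f (xs k)) atTop (𝓝 (f x)) ∧
      Tendsto vs atTop (𝓝 v) ∧ ∀ k, vs k ∈ fsubd f (xs k)}

/-- Sublevel set `{z | f z ≤ a}`. -/
def slev (f : E → EReal) (a : EReal) : Set E := {z | f z ≤ a}

/-- `d(0, ∂ f x)`, with the convention that the distance to the empty set is `∞`. -/
def subdist (f : E → EReal) (x : E) : ℝ≥0∞ := EMetric.infEdist 0 (lsubd f x)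

/-- Conversion of an extended real to `ℝ≥0∞` (truncating negative values). -/
def toENN (a : EReal) : ℝ≥0∞ := if a = ⊤ then ⊤ else ENNReal.ofReal a.toReal

/-- Moreau envelope `e_λ f`. -/
def moreauEnv (f : E → EReal) (lam : ℝ) (x : E) : EReal :=
  ⨅ y, f y + ((‖y - x‖ ^ 2 / (2 * lam) : ℝ) : EReal)

/-- Proximal mapping `P_λ f` (set of minimizers). -/
def proxPts (f : E → EReal) (lam : ℝ) (x : E) : Set E :=
  {y | ∀ z, f y + ((‖y - x‖ ^ 2 / (2 * lam) : ℝ) : EReal)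
        ≤ f z + ((‖z - x‖ ^ 2 / (2 * lam) : ℝ) : EReal)}

/-- `f` is prox-bounded. -/
def ProxBdd (f : E → EReal) : Prop := ∃ lam > (0 : ℝ), ∃ x, moreauEnv f lam x ≠ ⊥

/-- Threshold `λ_f` of prox-boundedness. -/
def proxThreshold (f : E → EReal) : ℝ :=
  sSup {lam | 0 < lam ∧ ∃ x, moreauEnv f lam x ≠ ⊥}

/-- `f` is proper (never `-∞`, somewhere finite). -/
def IsProperFn (f : E → EReal) : Prop := (∃ x, f x ≠ ⊤) ∧ ∀ x, f x ≠ ⊥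

/-- Kurdyka–Łojasiewicz property at `xb` with exponent `γ` and constant `μ`. -/
def KLAt (f : E → EReal) (xb : E) (γ μ : ℝ) : Prop :=
  ∃ η > (0:ℝ), ∃ ν > (0:ℝ), ∀ x ∈ Metric.ball xb η,
    f xb < f x → f x < f xb + (ν : EReal) →
    toENN (f x - f xb) ^ γ ≤ ENNReal.ofReal μ * subdist f x

/-- Level-set subdifferential error bound at `xb` with exponent `γ` and constant `μ`. -/
def LSEBAt (f : E → EReal) (xb : E) (γ μ : ℝ) : Prop :=
  ∃ η > (0:ℝ), ∃ ν > (0:ℝ), ∀ x ∈ Metric.ball xb η,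
    f xb < f x → f x < f xb + (ν : EReal) →
    EMetric.infEdist x (slev f (f xb)) ^ γ ≤ ENNReal.ofReal μ * subdist f x

/-- Local Hölder error bound at `xb` with exponent `γ` and constant `μ`. -/
def LHEBAt (f : E → EReal) (xb : E) (γ μ : ℝ) : Prop :=
  ∃ η > (0:ℝ), ∀ x ∈ Metric.ball xb η, f xb < f x →
    EMetric.infEdist x (slev f (f xb)) ^ γ ≤ ENNReal.ofReal μ * toENN (f x - f xb)

/-- Uniformized KL property on `Ω`. -/
def uKL (f : E → EReal) (Ω : Set E) (γ μ : ℝ) : Prop :=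
  ∃ ε > (0:ℝ), ∃ ν > (0:ℝ), ∀ xb ∈ Ω, ∀ x, Metric.infDist x Ω < ε →
    f xb < f x → f x < f xb + (ν : EReal) →
    toENN (f x - f xb) ^ γ ≤ ENNReal.ofReal μ * subdist f x

/-- Uniformized level-set subdifferential error bound on `Ω`. -/
def uLSEB (f : E → EReal) (Ω : Set E) (γ μ : ℝ) : Prop :=
  ∃ ε > (0:ℝ), ∃ ν > (0:ℝ), ∀ xb ∈ Ω, ∀ x, Metric.infDist x Ω < ε →
    f xb < f x → f x < f xb + (ν : EReal) →
    EMetric.infEdist x (slev f (f xb)) ^ γ ≤ ENNReal.ofReal μ * subdist f x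

/-- Uniformized Hölder error bound on `Ω`. -/
def uHEB (f : E → EReal) (Ω : Set E) (γ μ : ℝ) : Prop :=
  ∃ ε > (0:ℝ), ∀ xb ∈ Ω, ∀ x, Metric.infDist x Ω < ε → f xb < f x →
    EMetric.infEdist x (slev f (f xb)) ^ γ ≤ ENNReal.ofReal μ * toENN (f x - f xb)

/-- Prox-regularity of `f` at `xb` for `vb` with constant `ρ`. -/
def ProxRegularAt (f : E → EReal) (xb vb : E) (ρ : ℝ) : Prop :=
  vb ∈ lsubd f xb ∧ ∃ ε > (0:ℝ), ∀ x v, v ∈ lsubd f x → v ∈ Metric.ball vb ε →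
    x ∈ Metric.ball xb ε → f x < f xb + (ε : EReal) → ∀ y ∈ Metric.ball xb ε,
      f x + (((inner ℝ v (y - x) : ℝ) - ρ / 2 * ‖y - x‖ ^ 2 : ℝ) : EReal) ≤ f y

open Bornology

theorem LowerSemicontinuous.exists_forall_le_of_eventually_le {α β : Type*}
    [TopologicalSpace α] [LinearOrder β] {f : α → β} (hf : LowerSemicontinuous f) (x₀ : α)
    (h : ∀ᶠ x in cocompact α, f x₀ ≤ f x) : ∃ x, ∀ y, f x ≤ f y := by
  obtain ⟨K, hK, hKc⟩ := mem_cocompact.mp h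
  obtain ⟨a, -, ha⟩ := (hf.lowerSemicontinuousOn _).exists_isMinOn
    (insert_nonempty x₀ K) (hK.insert x₀)
  refine ⟨a, fun y => ?_⟩
  by_cases hy : y ∈ K
  · exact ha (mem_insert_of_mem _ hy)
  · exact (ha (mem_insert x₀ K)).trans (hKc hy)

theorem LowerSemicontinuous.le_of_tendsto {α β ι : Type*} [TopologicalSpace α]
    [LinearOrder β] [TopologicalSpace β] [OrderTopology β] [DenselyOrdered β]
    {l : Filter ι} [l.NeBot] {f : α → β} (hf : LowerSemicontinuous f) {u : ι → α} {x : α}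
    (hu : Tendsto u l (𝓝 x)) {b : ι → β} {c : β} (hb : Tendsto b l (𝓝 c))
    (hle : ∀ᶠ i in l, f (u i) ≤ b i) : f x ≤ c := by
  by_contra! hlt
  obtain ⟨d, hcd, hdf⟩ := exists_between hlt
  obtain ⟨i, hfu, hbi, hi⟩ :=
    ((hu.eventually (hf x d hdf)).and ((hb.eventually (gt_mem_nhds hcd)).and hle)).exists
  exact (hfu.trans_le hi).not_gt hbi

theorem tendsto_mul_sq_sub_mul_sub_atTop {c : ℝ} (hc : 0 < c) (b d : ℝ) :
    Tendsto (fun s : ℝ => c * s ^ 2 - b * s - d) atTop atTop := by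
  have hlin : Tendsto (fun s : ℝ => c * s - b) atTop atTop :=
    tendsto_atTop_add_const_right _ (-b) (tendsto_id.const_mul_atTop hc)
  refine tendsto_atTop_add_const_right _ (-d) (tendsto_id.atTop_mul_atTop₀ hlin) |>.congr ?_
  intro s
  simp only [id]
  ring

theorem add_rpow_one_div_rpow_max_le {lam γ μ s : ℝ} (hlam : 0 < lam) (hγ : 0 < γ) (hμ : 0 ≤ μ)
    (hs : 0 ≤ s) (hs1 : lam * s ≤ 1) :
    (lam * s + (μ * s) ^ (1 / γ)) ^ max 1 γ
      ≤ lam * (1 + (μ / lam) ^ (1 / γ)) ^ max 1 γ * s := by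
  set γ' := max 1 γ
  set t := lam * s
  have hγ' : 0 < γ' := lt_max_of_lt_left one_pos
  have ht : 0 ≤ t := mul_nonneg hlam.le hs
  have hc : 0 ≤ μ / lam := div_nonneg hμ hlam.le
  have ht_le : t ≤ t ^ (1 / γ') := by
    simpa using Real.rpow_le_rpow_of_exponent_ge' ht hs1 (by positivity)
      ((div_le_one hγ').mpr (le_max_left 1 γ))
  have hμs : (μ * s) ^ (1 / γ) ≤ (μ / lam) ^ (1 / γ) * t ^ (1 / γ') := by
    rw [show μ * s = μ / lam * t by simp only [t]; field_simp, Real.mul_rpow hc ht]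
    exact mul_le_mul_of_nonneg_left (Real.rpow_le_rpow_of_exponent_ge' ht hs1 (by positivity)
      (one_div_le_one_div_of_le hγ (le_max_right 1 γ))) (by positivity)
  calc (t + (μ * s) ^ (1 / γ)) ^ γ'
      ≤ (t ^ (1 / γ') * (1 + (μ / lam) ^ (1 / γ))) ^ γ' :=
        Real.rpow_le_rpow (by positivity) (by linarith) hγ'.le
    _ = lam * (1 + (μ / lam) ^ (1 / γ)) ^ γ' * s := by
        rw [Real.mul_rpow (by positivity) (by positivity), ← Real.rpow_mul ht,
          one_div_mul_cancel hγ'.ne', Real.rpow_one]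
        ring

theorem ENNReal.le_ofReal_rpow_one_div_of_rpow_le {a : ℝ≥0∞} {b γ : ℝ} (hγ : 0 < γ)
    (hb : 0 ≤ b) (h : a ^ γ ≤ ENNReal.ofReal b) : a ≤ ENNReal.ofReal (b ^ (1 / γ)) := by
  rwa [← ENNReal.ofReal_rpow_of_nonneg hb (by positivity), one_div, ENNReal.le_rpow_inv_iff hγ]

theorem ENNReal.rpow_le_ofReal_of_le_ofReal {a : ℝ≥0∞} {b c γ : ℝ} (hγ : 0 < γ)
    (hab : a ≤ ENNReal.ofReal b) (hbc : b ^ γ ≤ c) : a ^ γ ≤ ENNReal.ofReal c := by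
  rcases le_or_gt 0 b with hb | hb
  · calc a ^ γ ≤ ENNReal.ofReal b ^ γ := ENNReal.rpow_le_rpow hab hγ.le
      _ = ENNReal.ofReal (b ^ γ) := ENNReal.ofReal_rpow_of_nonneg hb hγ.le
      _ ≤ ENNReal.ofReal c := ENNReal.ofReal_le_ofReal hbc
  · rw [ENNReal.ofReal_of_nonpos hb.le, nonpos_iff_eq_zero] at hab
    simp [hab, hγ]

theorem ENNReal.le_mul_infEDist {α : Type*} [PseudoEMetricSpace α] {a c : ℝ≥0∞} (hc : c ≠ 0)
    (hc' : c ≠ ⊤) {x : α} {s : Set α} (h : ∀ y ∈ s, a ≤ c * edist x y) :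
    a ≤ c * Metric.infEDist x s := by
  rw [mul_comm, ← ENNReal.div_le_iff hc hc', Metric.le_infEDist]
  exact fun y hy => (ENNReal.div_le_iff hc hc').mpr (mul_comm c _ ▸ h y hy)

theorem Metric.infEDist_rpow_le_of_mem_ball {α : Type*} [PseudoMetricSpace α] {s : Set α}
    {x y : α} {c γ : ℝ} (hγ : 0 < γ) (hc : 0 ≤ c) (hy : y ∈ s)
    (hx : x ∈ Metric.ball y (c ^ (1 / γ))) : Metric.infEDist x s ^ γ ≤ ENNReal.ofReal c := by
  refine ENNReal.rpow_le_ofReal_of_le_ofReal (b := c ^ (1 / γ)) hγ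
    ((Metric.infEDist_le_edist_of_mem hy).trans ?_) ?_
  · rw [edist_dist]
    exact ENNReal.ofReal_le_ofReal (Metric.mem_ball.mp hx).le
  · rw [one_div, Real.rpow_inv_rpow hc hγ.ne']

theorem tendsto_norm_sub_sq_div_sub_norm_sub_sq_div {F : Type*} [SeminormedAddCommGroup F]
    {lam lam' : ℝ} (h0 : 0 < lam) (hll : lam < lam') (x x₀ : F) :
    Tendsto (fun y => ‖y - x‖ ^ 2 / (2 * lam) - ‖y - x₀‖ ^ 2 / (2 * lam')) (cobounded F)
      atTop := by
  have hc : 0 < 1 / (2 * lam) - 1 / (2 * lam') := by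
    have : 1 / (2 * lam') < 1 / (2 * lam) :=
      one_div_lt_one_div_of_lt (by positivity) (by linarith)
    linarith
  have hl' : 0 < lam' := h0.trans hll
  set D := ‖x - x₀‖
  have hs : Tendsto (fun y => ‖y - x‖) (cobounded F) atTop :=
    tendsto_norm_cobounded_atTop.comp (tendsto_sub_const_cobounded x)
  refine tendsto_atTop_mono (fun y => ?_)
    ((tendsto_mul_sq_sub_mul_sub_atTop hc (D / lam') (D ^ 2 / (2 * lam'))).comp hs)
  have htri : ‖y - x₀‖ ≤ ‖y - x‖ + D := by
    simpa [sub_add_sub_cancel] using norm_add_le (y - x) (x - x₀)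
  have hsq : ‖y - x₀‖ ^ 2 ≤ (‖y - x‖ + D) ^ 2 := pow_le_pow_left₀ (norm_nonneg _) htri 2
  have hdiv : ‖y - x₀‖ ^ 2 / (2 * lam') ≤ (‖y - x‖ + D) ^ 2 / (2 * lam') := by gcongr
  simp only [Function.comp]
  have hexp : (1 / (2 * lam) - 1 / (2 * lam')) * ‖y - x‖ ^ 2 - D / lam' * ‖y - x‖
      - D ^ 2 / (2 * lam') = ‖y - x‖ ^ 2 / (2 * lam) - (‖y - x‖ + D) ^ 2 / (2 * lam') := by
    field_simp
    ring
  linarith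

section NormedAddCommGroup

variable {F : Type*} [NormedAddCommGroup F]

theorem moreauEnv_le (f : F → EReal) (lam : ℝ) (x y : F) :
    moreauEnv f lam x ≤ f y + ((‖y - x‖ ^ 2 / (2 * lam) : ℝ) : EReal) :=
  iInf_le _ y

theorem moreauEnv_le_self (f : F → EReal) (lam : ℝ) (x : F) : moreauEnv f lam x ≤ f x := by
  simpa using moreauEnv_le f lam x x

theorem ne_bot_of_moreauEnv_ne_bot {f : F → EReal} {lam : ℝ} {x : F}
    (h : moreauEnv f lam x ≠ ⊥) (y : F) : f y ≠ ⊥ := by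
  intro hy
  have := moreauEnv_le f lam x y
  rw [hy, EReal.bot_add, le_bot_iff] at this
  exact h this

theorem exists_lt_moreauEnv_ne_bot {f : F → EReal} {lam : ℝ}
    (hlam : lam ∈ Ioo 0 (proxThreshold f)) : ∃ lam' > lam, ∃ x, moreauEnv f lam' x ≠ ⊥ := by
  have hne : {l | 0 < l ∧ ∃ x, moreauEnv f l x ≠ ⊥}.Nonempty := by
    by_contra h
    have := hlam.2
    rw [proxThreshold, not_nonempty_iff_eq_empty.mp h, Real.sSup_empty] at this
    exact this.not_gt hlam.1
  obtain ⟨l, ⟨-, hl⟩, hlt⟩ := exists_lt_of_lt_csSup hne hlam.2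
  exact ⟨l, hlt, hl⟩

theorem eventually_lt_add_norm_sub_sq_div {f : F → EReal} {lam lam' : ℝ} (h0 : 0 < lam)
    (hll : lam < lam') {x₀ : F} (hx₀ : moreauEnv f lam' x₀ ≠ ⊥) (x : F) (r : ℝ) :
    ∀ᶠ y in cobounded F, (r : EReal) < f y + ((‖y - x‖ ^ 2 / (2 * lam) : ℝ) : EReal) := by
  obtain ⟨m, -, hm⟩ := EReal.exists_between_coe_real (bot_lt_iff_ne_bot.mpr hx₀)
  filter_upwards [(tendsto_norm_sub_sq_div_sub_norm_sub_sq_div h0 hll x x₀).eventually_gt_atTop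
    (r - m)] with y hy
  have hmy := hm.trans_le (moreauEnv_le f lam' x₀ y)
  rcases eq_or_ne (f y) ⊤ with htop | htop
  · rw [htop, EReal.top_add_coe]
    exact EReal.coe_lt_top r
  lift f y to ℝ using ⟨htop, ne_bot_of_moreauEnv_ne_bot hx₀ y⟩ with a
  rw [← EReal.coe_add] at hmy ⊢
  rw [EReal.coe_lt_coe_iff] at hmy ⊢
  linarith

theorem LowerSemicontinuous.add_norm_sub_sq_div {f : F → EReal} (hf : LowerSemicontinuous f)
    (lam : ℝ) (x : F) :
    LowerSemicontinuous fun y => f y + ((‖y - x‖ ^ 2 / (2 * lam) : ℝ) : EReal) := by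
  have hq : Continuous fun y : F => ((‖y - x‖ ^ 2 / (2 * lam) : ℝ) : EReal) :=
    continuous_coe_real_ereal.comp (by fun_prop)
  refine hf.add' hq.lowerSemicontinuous fun y => ?_
  exact EReal.continuousAt_add (Or.inr (EReal.coe_ne_bot _)) (Or.inr (EReal.coe_ne_top _))

theorem nonempty_proxPts [ProperSpace F] {f : F → EReal} (hf : LowerSemicontinuous f)
    {lam : ℝ} (hlam : lam ∈ Ioo 0 (proxThreshold f)) {x : F} (hx : moreauEnv f lam x ≠ ⊤) :
    (proxPts f lam x).Nonempty := by
  obtain ⟨z, hz⟩ := iInf_lt_iff.mp (lt_top_iff_ne_top.mpr hx)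
  obtain ⟨lam', hll, x₀, hx₀⟩ := exists_lt_moreauEnv_ne_bot hlam
  have hcoer := eventually_lt_add_norm_sub_sq_div hlam.1 hll hx₀ x
    (f z + ((‖z - x‖ ^ 2 / (2 * lam) : ℝ) : EReal)).toReal
  rw [Metric.cobounded_eq_cocompact] at hcoer
  exact (hf.add_norm_sub_sq_div lam x).exists_forall_le_of_eventually_le z
    (hcoer.mono fun y hy => ((EReal.le_coe_toReal hz.ne).trans hy.le))

theorem moreauEnv_eq_of_mem_proxPts {f : F → EReal} {lam : ℝ} {x p : F}
    (hp : p ∈ proxPts f lam x) :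
    moreauEnv f lam x = f p + ((‖p - x‖ ^ 2 / (2 * lam) : ℝ) : EReal) :=
  le_antisymm (moreauEnv_le f lam x p) (le_iInf hp)

theorem le_moreauEnv_of_mem_proxPts {f : F → EReal} {lam : ℝ} (hlam : 0 ≤ lam) {x p : F}
    (hp : p ∈ proxPts f lam x) : f p ≤ moreauEnv f lam x := by
  rw [moreauEnv_eq_of_mem_proxPts hp]
  exact le_add_of_nonneg_right (EReal.coe_nonneg.mpr (by positivity))

end NormedAddCommGroup

theorem eq_zero_of_forall_eventually_inner_le {u y : E}
    (h : ∀ ε > 0, ∀ᶠ z in 𝓝 y, ⟪u, z - y⟫ ≤ ε * ‖z - y‖) : u = 0 := by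
  by_contra hu
  have hpos : 0 < ‖u‖ := norm_pos_iff.mpr hu
  have hray : Tendsto (fun t : ℝ => y + t • u) (𝓝[>] 0) (𝓝 y) := by
    have : Continuous fun t : ℝ => y + t • u := by fun_prop
    simpa using (this.tendsto 0).mono_left nhdsWithin_le_nhds
  obtain ⟨t, ht, ht0⟩ :=
    ((hray.eventually (h (‖u‖ / 2) (by positivity))).and self_mem_nhdsWithin).exists
  simp only [add_sub_cancel_left, inner_smul_right, real_inner_self_eq_norm_sq, norm_smul,
    Real.norm_eq_abs, abs_of_pos ht0] at ht
  nlinarith [mul_pos ht0 hpos]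

theorem eq_of_mem_fsubd_of_le_of_hasFDerivAt {g : E → EReal} {q : E → ℝ} {y v w : E}
    (hv : v ∈ fsubd g y) (hle : ∀ᶠ z in 𝓝 y, g z ≤ q z) (heq : g y = q y)
    (hq : HasFDerivAt q (innerSL ℝ w) y) : v = w := by
  refine sub_eq_zero.mp (eq_zero_of_forall_eventually_inner_le (y := y) fun ε hε => ?_)
  filter_upwards [hv.2.2 (ε / 2) (by positivity), hq.isLittleO.bound (half_pos hε), hle]
    with z hvz hqz hgz
  rw [heq, EReal.toReal_coe] at hvz
  have hz := EReal.coe_le_coe_iff.mp (hvz.trans hgz)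
  rw [innerSL_apply_apply, Real.norm_eq_abs, abs_le] at hqz
  rw [inner_sub_left]
  linarith [hqz.1]

theorem mem_fsubd_of_le_of_hasFDerivAt {f : E → EReal} {q : E → ℝ} {p w : E}
    (hp : f p ≠ ⊤) (hp' : f p ≠ ⊥) (hle : ∀ᶠ z in 𝓝 p, f p + ((q z - q p : ℝ) : EReal) ≤ f z)
    (hq : HasFDerivAt q (innerSL ℝ w) p) : w ∈ fsubd f p := by
  refine ⟨hp, hp', fun ε hε => ?_⟩
  filter_upwards [hq.isLittleO.bound hε, hle] with z hqz hfz
  rw [← EReal.coe_toReal hp hp', ← EReal.coe_add] at hfz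
  refine le_trans (EReal.coe_le_coe_iff.mpr ?_) hfz
  rw [innerSL_apply_apply, Real.norm_eq_abs, abs_le] at hqz
  linarith [hqz.1]

theorem hasFDerivAt_norm_sub_sq_div (a : E) (c : ℝ) (x : E) :
    HasFDerivAt (fun z => ‖z - a‖ ^ 2 / (2 * c)) (innerSL ℝ (c⁻¹ • (x - a))) x := by
  have h := ((hasFDerivAt_id x).sub_const a).norm_sq.mul_const (2 * c)⁻¹
  simp only [id, ← div_eq_mul_inv] at h
  refine h.congr_fderiv (ContinuousLinearMap.ext fun z => ?_)
  simp only [mul_inv_rev, map_sub, ContinuousLinearMap.comp_id, smul_apply,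
    sub_apply, coe_innerSL_apply, nsmul_eq_mul, Nat.cast_ofNat, smul_eq_mul,
    map_smul]
  ring

theorem mem_lsubd_of_mem_fsubd {f : E → EReal} {x v : E} (h : v ∈ fsubd f x) :
    v ∈ lsubd f x :=
  ⟨fun _ => x, fun _ => v, tendsto_const_nhds, tendsto_const_nhds, tendsto_const_nhds,
    fun _ => h⟩

theorem mem_fsubd_of_mem_proxPts {f : E → EReal} {lam : ℝ} {x p : E}
    (hp : p ∈ proxPts f lam x) (hpt : f p ≠ ⊤) (hpb : f p ≠ ⊥) :
    lam⁻¹ • (x - p) ∈ fsubd f p := by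
  have hq := (hasFDerivAt_norm_sub_sq_div x lam p).neg
  rw [← map_neg, ← smul_neg, neg_sub] at hq
  refine mem_fsubd_of_le_of_hasFDerivAt hpt hpb (Eventually.of_forall fun z => ?_) hq
  have hz := EReal.sub_le_of_le_add (hp z)
  rwa [sub_eq_add_neg, add_assoc, ← sub_eq_add_neg, ← EReal.coe_sub, ← neg_sub_neg] at hz

theorem eq_of_mem_fsubd_moreauEnv {f : E → EReal} {lam : ℝ} {y v p : E}
    (hv : v ∈ fsubd (moreauEnv f lam) y) (hp : p ∈ proxPts f lam y) (hpt : f p ≠ ⊤)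
    (hpb : f p ≠ ⊥) : v = lam⁻¹ • (y - p) := by
  refine eq_of_mem_fsubd_of_le_of_hasFDerivAt hv (Eventually.of_forall fun z => ?_) ?_
    ((hasFDerivAt_norm_sub_sq_div p lam y).const_add (f p).toReal)
  · rw [EReal.coe_add, EReal.coe_toReal hpt hpb, ← norm_sub_rev]
    exact moreauEnv_le f lam z p
  · rw [moreauEnv_eq_of_mem_proxPts hp, EReal.coe_add, EReal.coe_toReal hpt hpb, norm_sub_rev]

theorem mem_proxPts_of_mem_fsubd_moreauEnv [ProperSpace E] {f : E → EReal}
    (hf : LowerSemicontinuous f) {lam : ℝ} (hlam : lam ∈ Ioo 0 (proxThreshold f)) {y v : E}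
    (hv : v ∈ fsubd (moreauEnv f lam) y) :
    y - lam • v ∈ proxPts f lam y ∧ v ∈ fsubd f (y - lam • v) := by
  obtain ⟨p, hp⟩ := nonempty_proxPts hf hlam hv.1
  obtain ⟨lam', -, x₀, hx₀⟩ := exists_lt_moreauEnv_ne_bot hlam
  have hpb := ne_bot_of_moreauEnv_ne_bot hx₀ p
  have hpt : f p ≠ ⊤ := fun h => hv.1 <| by
    rw [moreauEnv_eq_of_mem_proxPts hp, h, EReal.top_add_coe]
  have hvp := eq_of_mem_fsubd_moreauEnv hv hp hpt hpb
  have hyp : y - lam • v = p := by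
    rw [hvp, smul_smul, mul_inv_cancel₀ hlam.1.ne', one_smul, sub_sub_cancel]
  rw [hyp]
  exact ⟨hp, hvp ▸ mem_fsubd_of_mem_proxPts hp hpt hpb⟩

theorem moreauEnv_eq_of_zero_mem_lsubd [ProperSpace E] {f : E → EReal}
    (hf : LowerSemicontinuous f) {lam : ℝ} (hlam : lam ∈ Ioo 0 (proxThreshold f)) {x : E}
    (hx : 0 ∈ lsubd (moreauEnv f lam) x) : moreauEnv f lam x = f x := by
  refine le_antisymm (moreauEnv_le_self f lam x) ?_
  obtain ⟨xs, vs, hxs, hgs, hvs, hfs⟩ := hx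
  refine hf.le_of_tendsto (u := fun k => xs k - lam • vs k) ?_ hgs (Eventually.of_forall fun k =>
    le_moreauEnv_of_mem_proxPts hlam.1.le (mem_proxPts_of_mem_fsubd_moreauEnv hf hlam (hfs k)).1)
  simpa using hxs.sub (hvs.const_smul lam)

section ErrorBound

variable [ProperSpace E] {f : E → EReal} {lam : ℝ} {xb : E} {γ μ η ν : ℝ}

theorem infEDist_slev_le_of_mem_fsubd_moreauEnv (hf : LowerSemicontinuous f)
    (hlam : lam ∈ Ioo 0 (proxThreshold f)) (hγ : 0 < γ) (hμ : 0 ≤ μ)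
    (hf_eb : ∀ x ∈ Metric.ball xb η, f xb < f x → f x < f xb + (ν : EReal) →
      Metric.infEDist x (slev f (f xb)) ^ γ ≤ ENNReal.ofReal μ * subdist f x)
    {y v : E} (hv : v ∈ fsubd (moreauEnv f lam) y) (hball : y - lam • v ∈ Metric.ball xb η)
    (hy : moreauEnv f lam y < f xb + (ν : EReal)) :
    Metric.infEDist y (slev f (f xb)) ≤ ENNReal.ofReal (lam * ‖v‖ + (μ * ‖v‖) ^ (1 / γ)) := by
  set p := y - lam • v
  have hμv : 0 ≤ μ * ‖v‖ := mul_nonneg hμ (norm_nonneg v)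
  obtain ⟨hp, hvp⟩ := mem_proxPts_of_mem_fsubd_moreauEnv hf hlam hv
  have hyp : edist y p = ENNReal.ofReal (lam * ‖v‖) := by
    rw [edist_dist, dist_eq_norm, sub_sub_cancel, norm_smul, Real.norm_of_nonneg hlam.1.le]
  have hpS : Metric.infEDist p (slev f (f xb)) ≤ ENNReal.ofReal ((μ * ‖v‖) ^ (1 / γ)) := by
    rcases le_or_gt (f p) (f xb) with hle | hlt
    · rw [Metric.infEDist_zero_of_mem (show p ∈ slev f (f xb) from hle)]
      exact zero_le
    have hsub : subdist f p ≤ ENNReal.ofReal ‖v‖ :=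
      (Metric.infEDist_le_edist_of_mem (mem_lsubd_of_mem_fsubd hvp)).trans_eq
        (by rw [edist_dist, dist_zero_left])
    have hfp := (le_moreauEnv_of_mem_proxPts hlam.1.le hp).trans_lt hy
    refine ENNReal.le_ofReal_rpow_one_div_of_rpow_le hγ hμv ((hf_eb p hball hlt hfp).trans ?_)
    rw [ENNReal.ofReal_mul hμ]
    gcongr
  calc Metric.infEDist y (slev f (f xb)) ≤ edist y p + Metric.infEDist p (slev f (f xb)) :=
        Metric.infEDist_le_edist_add_infEDist
    _ ≤ ENNReal.ofReal (lam * ‖v‖) + ENNReal.ofReal ((μ * ‖v‖) ^ (1 / γ)) := by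
        rw [hyp]
        gcongr
    _ = ENNReal.ofReal (lam * ‖v‖ + (μ * ‖v‖) ^ (1 / γ)) :=
        (ENNReal.ofReal_add (mul_nonneg hlam.1.le (norm_nonneg v))
          (Real.rpow_nonneg hμv _)).symm

theorem infEDist_slev_le_of_mem_lsubd_moreauEnv (hf : LowerSemicontinuous f)
    (hlam : lam ∈ Ioo 0 (proxThreshold f)) (hγ : 0 < γ) (hμ : 0 ≤ μ)
    (hf_eb : ∀ x ∈ Metric.ball xb η, f xb < f x → f x < f xb + (ν : EReal) →
      Metric.infEDist x (slev f (f xb)) ^ γ ≤ ENNReal.ofReal μ * subdist f x)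
    {x v : E} (hv : v ∈ lsubd (moreauEnv f lam) x) (hball : x - lam • v ∈ Metric.ball xb η)
    (hx : moreauEnv f lam x < f xb + (ν : EReal)) :
    Metric.infEDist x (slev f (f xb)) ≤ ENNReal.ofReal (lam * ‖v‖ + (μ * ‖v‖) ^ (1 / γ)) := by
  obtain ⟨xs, vs, hxs, hgs, hvs, hfs⟩ := hv
  have hbound : Continuous fun s : ℝ => ENNReal.ofReal (lam * s + (μ * s) ^ (1 / γ)) :=
    ENNReal.continuous_ofReal.comp <| (continuous_const.mul continuous_id).add <|
      (Real.continuous_rpow_const (by positivity)).comp (continuous_const.mul continuous_id)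
  refine le_of_tendsto_of_tendsto (Metric.continuous_infEDist.tendsto x |>.comp hxs)
    ((hbound.tendsto _).comp hvs.norm) ?_
  filter_upwards [(hxs.sub (hvs.const_smul lam)).eventually
    (Metric.isOpen_ball.mem_nhds hball), hgs.eventually (gt_mem_nhds hx)] with k hk hk'
  exact infEDist_slev_le_of_mem_fsubd_moreauEnv hf hlam hγ hμ hf_eb (hfs k) hk hk'

theorem infEDist_slev_moreauEnv_rpow_le_of_mem_lsubd (hf : LowerSemicontinuous f)
    (hlam : lam ∈ Ioo 0 (proxThreshold f)) (hγ : 0 < γ) (hμ : 0 ≤ μ)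
    (hf_eb : ∀ x ∈ Metric.ball xb η, f xb < f x → f x < f xb + (ν : EReal) →
      Metric.infEDist x (slev f (f xb)) ^ γ ≤ ENNReal.ofReal μ * subdist f x)
    {x v : E} (hv : v ∈ lsubd (moreauEnv f lam) x) (hball : x - lam • v ∈ Metric.ball xb η)
    (hx : moreauEnv f lam x < f xb + (ν : EReal)) (hv1 : lam * ‖v‖ ≤ 1) :
    Metric.infEDist x (slev (moreauEnv f lam) (f xb)) ^ max 1 γ
      ≤ ENNReal.ofReal (lam * (1 + (μ / lam) ^ (1 / γ)) ^ max 1 γ * ‖v‖) :=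
  ENNReal.rpow_le_ofReal_of_le_ofReal (lt_max_of_lt_left one_pos)
    ((Metric.infEDist_anti fun z hz => (moreauEnv_le_self f lam z).trans hz).trans
      (infEDist_slev_le_of_mem_lsubd_moreauEnv hf hlam hγ hμ hf_eb hv hball hx))
    (add_rpow_one_div_rpow_max_le hlam.1 hγ hμ (norm_nonneg v) hv1)

end ErrorBound

theorem stmt10_general {n : ℕ} (f : EuclideanSpace ℝ (Fin n) → EReal)
    (hlsc : LowerSemicontinuous f)
    (lam : ℝ) (hlam : lam ∈ Set.Ioo 0 (proxThreshold f))
    (xb : EuclideanSpace ℝ (Fin n))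
    (hcrit : (0 : EuclideanSpace ℝ (Fin n)) ∈ lsubd (moreauEnv f lam) xb)
    (γ μ : ℝ) (hγ : 0 < γ) (hμ : 0 < μ) (h : LSEBAt f xb γ μ) :
    LSEBAt (moreauEnv f lam) xb (max 1 γ)
      (lam * (1 + (μ / lam) ^ (1 / γ)) ^ (max 1 γ)) := by
  obtain ⟨ηf, hηf, ν, hν, hf_eb⟩ := h
  have h0 : 0 < lam := hlam.1
  set μ' := lam * (1 + (μ / lam) ^ (1 / γ)) ^ max 1 γ
  have hμ' : 0 < μ' := by positivity
  -- Subgradients with `‖v‖ < δ` keep the proximal point `x - λ v` in the ball where the bound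
  -- for `f` holds and have `λ ‖v‖ ≤ 1`; for larger ones the small radius of the ball suffices.
  set δ := min 1 (ηf / 2) / lam
  have hδ : 0 < δ := by positivity
  refine ⟨min (ηf / 2) ((μ' * δ) ^ (1 / max 1 γ)), by positivity, ν, hν,
    fun x hx _ hupp => ?_⟩
  rw [moreauEnv_eq_of_zero_mem_lsubd hlsc hlam hcrit] at hupp ⊢
  refine ENNReal.le_mul_infEDist (by positivity) ENNReal.ofReal_ne_top fun v hv => ?_
  rw [edist_dist, dist_zero_left, ← ENNReal.ofReal_mul hμ'.le]
  rcases le_or_gt δ ‖v‖ with hvδ | hvδ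
  · exact (Metric.infEDist_rpow_le_of_mem_ball (s := slev (moreauEnv f lam) (f xb))
      (lt_max_of_lt_left one_pos) (by positivity) (moreauEnv_le_self f lam xb)
      (Metric.ball_subset_ball (min_le_right _ _) hx)).trans
      (ENNReal.ofReal_le_ofReal (by gcongr))
  have hlamv : lam * ‖v‖ < min 1 (ηf / 2) := by rwa [mul_comm, ← lt_div_iff₀ h0]
  have hball : x - lam • v ∈ Metric.ball xb ηf := by
    have := dist_triangle (x - lam • v) x xb
    rw [dist_self_sub_left, norm_smul, Real.norm_of_nonneg h0.le] at this
    have hxb : dist x xb < ηf / 2 := (Metric.mem_ball.mp hx).trans_le (min_le_left _ _)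
    exact Metric.mem_ball.mpr (by linarith [min_le_right 1 (ηf / 2)])
  exact infEDist_slev_moreauEnv_rpow_le_of_mem_lsubd hlsc hlam hγ hμ.le hf_eb hv hball hupp
    (hlamv.le.trans (min_le_left _ _))

theorem stmt10 {n : ℕ} (f : EuclideanSpace ℝ (Fin n) → EReal)
    (hproper : IsProperFn f) (hlsc : LowerSemicontinuous f) (hpb : ProxBdd f)
    (lam : ℝ) (hlam : lam ∈ Set.Ioo 0 (proxThreshold f))
    (xb : EuclideanSpace ℝ (Fin n)) (hdom : f xb ≠ ⊤)
    (hcrit : (0 : EuclideanSpace ℝ (Fin n)) ∈ lsubd (moreauEnv f lam) xb)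
    (γ μ : ℝ) (hγ : 0 < γ) (hμ : 0 < μ) (h : LSEBAt f xb γ μ) :
    LSEBAt (moreauEnv f lam) xb (max 1 γ)
      (lam * (1 + (μ / lam) ^ (1 / γ)) ^ (max 1 γ)) :=
  stmt10_general f hlsc lam hlam xb hcrit γ μ hγ hμ h
end
end

section
/- Define f : ℝ → ℝ by f(x) = 0 for x ≤ 0, f(x) = x² + 1/n - 1/n² for 1/n < x ≤ 1/(n-1) (n = 3, 4, ...), and f(x) = x² + 1/4 for x > 1/2. Then f does not satisfy the Kurdyka–Łojasiewicz property at x̄ = 0 with any exponent α ∈ [0, 1): for x_n = 1/(n-1), (f(x_n) - f(0))^{-α} · d(0, ∂f(x_n)) → 0 as n → ∞. -/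
open Filter Topology Set
open scoped ENNReal NNReal RealInnerProductSpace

noncomputable section

variable {E : Type*} [NormedAddCommGroup E] [InnerProductSpace ℝ E]

/-!
At `x = 1/m` the function is `y ↦ y² + c` on the left and lies above that parabola on the
right (the constants `t - t²`, `t = 1/n`, increase with `t`), so `2/m` is a Fréchet, hence
limiting, subgradient there. Meanwhile `f (1/m) > 1/(m+1)`, so the KL quotient
`f(1/m)^(-α) · d(0, ∂f(1/m))` is at most `4 (m+1)^(α-1) → 0`, which is incompatible with any
KL inequality at `0`.
-/

theorem HasFDerivAt.mem_fsubd_of_le {f φ : E → ℝ} {x g : E}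
    (hφ : HasFDerivAt φ (innerSL ℝ g) x) (hle : ∀ᶠ y in 𝓝 x, φ y ≤ f y) (heq : φ x = f x) :
    g ∈ fsubd (fun y => (f y : EReal)) x := by
  refine ⟨EReal.coe_ne_top _, EReal.coe_ne_bot _, fun ε hε => ?_⟩
  filter_upwards [hφ.isLittleO.def hε, hle] with y hy hφy
  rw [innerSL_apply_apply, Real.norm_eq_abs, abs_le] at hy
  rw [EReal.toReal_coe, EReal.coe_le_coe_iff]
  linarith [hy.1]

theorem fsubd_subset_lsubd (f : E → EReal) (x : E) : fsubd f x ⊆ lsubd f x :=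
  fun v hv => ⟨fun _ => x, fun _ => v, tendsto_const_nhds, tendsto_const_nhds,
    tendsto_const_nhds, fun _ => hv⟩

theorem subdist_le_of_mem_lsubd {f : E → EReal} {x v : E} (hv : v ∈ lsubd f x) :
    subdist f x ≤ ‖v‖ₑ :=
  (Metric.infEDist_le_edist_of_mem hv).trans_eq (edist_zero_left v)

theorem toENN_coe_sub_coe (a b : ℝ) : toENN ((a : EReal) - b) = ENNReal.ofReal (a - b) := by
  rw [← EReal.coe_sub, toENN, if_neg (EReal.coe_ne_top _), EReal.toReal_coe]

/-- Multiplied by `(f x - f xb)^(-α)`, the KL inequality at `x` reads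
`1 ≤ μ · (f x - f xb)^(-α) · d(0, ∂f x)`. -/
theorem not_klAt_of_tendsto {f : E → ℝ} {xb : E} {α μ : ℝ} {xs : ℕ → E}
    (hxs : Tendsto xs atTop (𝓝 xb)) (hfxs : Tendsto (fun k => f (xs k)) atTop (𝓝 (f xb)))
    (hpos : ∀ᶠ k in atTop, f xb < f (xs k))
    (hlim : Tendsto (fun k => ENNReal.ofReal ((f (xs k) - f xb) ^ (-α)) *
      subdist (fun x => (f x : EReal)) (xs k)) atTop (𝓝 0)) :
    ¬ KLAt (fun x => (f x : EReal)) xb α μ := by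
  rintro ⟨η, hη, ν, hν, hKL⟩
  have hμlim := ENNReal.Tendsto.const_mul hlim (Or.inr (ENNReal.ofReal_ne_top (r := μ)))
  rw [mul_zero] at hμlim
  obtain ⟨k, ⟨hball, hlow, hup⟩, hsmall⟩ := ((hxs.eventually (Metric.ball_mem_nhds xb hη)).and
    (hpos.and (hfxs.eventually (gt_mem_nhds (lt_add_of_pos_right (f xb) hν))))).and
    (hμlim.eventually (gt_mem_nhds zero_lt_one)) |>.exists
  have hkl := hKL (xs k) hball (EReal.coe_lt_coe_iff.2 hlow)
    (by exact_mod_cast hup : ((f (xs k) : ℝ) : EReal) < (f xb : EReal) + (ν : EReal))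
  set d := f (xs k) - f xb
  set s := subdist (fun x => (f x : EReal)) (xs k)
  have hd : 0 < d := sub_pos.2 hlow
  rw [toENN_coe_sub_coe, ENNReal.ofReal_rpow_of_pos hd] at hkl
  refine hsmall.not_ge ?_
  calc 1 = ENNReal.ofReal (d ^ (-α)) * ENNReal.ofReal (d ^ α) := by
        rw [← ENNReal.ofReal_mul (Real.rpow_nonneg hd.le _), ← Real.rpow_add hd, neg_add_cancel,
          Real.rpow_zero, ENNReal.ofReal_one]
    _ ≤ ENNReal.ofReal (d ^ (-α)) * (ENNReal.ofReal μ * s) := mul_le_mul_right hkl _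
    _ = ENNReal.ofReal μ * (ENNReal.ofReal (d ^ (-α)) * s) := mul_left_comm _ _ _

theorem sub_sq_le_sub_sq {s t : ℝ} (hst : s ≤ t) (hsum : s + t ≤ 1) : s - s ^ 2 ≤ t - t ^ 2 := by
  nlinarith

section Staircase

def IsStaircase (f : ℝ → ℝ) : Prop :=
  ∀ n : ℕ, 3 ≤ n → ∀ x : ℝ, 1 / (n:ℝ) < x → x ≤ 1 / ((n:ℝ) - 1) →
    f x = x ^ 2 + 1 / (n:ℝ) - 1 / (n:ℝ) ^ 2

variable {f : ℝ → ℝ} {m : ℕ}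

theorem IsStaircase.apply_of_mem_Ioc (hf : IsStaircase f) (hm : 2 ≤ m) {y : ℝ}
    (hy : y ∈ Set.Ioc (1 / ((m:ℝ) + 1)) (1 / (m:ℝ))) :
    f y = y ^ 2 + 1 / ((m:ℝ) + 1) - 1 / ((m:ℝ) + 1) ^ 2 := by
  have := hf (m + 1) (by omega) y
  push_cast at this
  rw [add_sub_cancel_right] at this
  exact this hy.1 hy.2

theorem IsStaircase.apply_inv (hf : IsStaircase f) (hm : 2 ≤ m) :
    f (1 / m) = 1 / (m:ℝ) ^ 2 + 1 / ((m:ℝ) + 1) - 1 / ((m:ℝ) + 1) ^ 2 := by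
  have hm0 : (0:ℝ) < m := by positivity
  rw [hf.apply_of_mem_Ioc hm ⟨one_div_lt_one_div_of_lt hm0 (lt_add_one _), le_rfl⟩, div_pow,
    one_pow]

theorem IsStaircase.eventually_parabola_le (hf : IsStaircase f) (hm : 3 ≤ m) :
    ∀ᶠ y in 𝓝 (1 / (m:ℝ)), y ^ 2 + 1 / ((m:ℝ) + 1) - 1 / ((m:ℝ) + 1) ^ 2 ≤ f y := by
  have hm3 : (3:ℝ) ≤ m := by exact_mod_cast hm
  have hm1 : (0:ℝ) < m - 1 := by linarith
  have hlt : 1 / (m:ℝ) < 1 / ((m:ℝ) - 1) := one_div_lt_one_div_of_lt hm1 (by linarith)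
  have hmem : 1 / (m:ℝ) ∈ Set.Ioo (1 / ((m:ℝ) + 1)) (1 / ((m:ℝ) - 1)) :=
    ⟨one_div_lt_one_div_of_lt (by linarith) (lt_add_one _), hlt⟩
  filter_upwards [Ioo_mem_nhds hmem.1 hmem.2] with y hy
  rcases le_or_gt y (1 / m) with hyl | hyr
  · exact (hf.apply_of_mem_Ioc (by omega) ⟨hy.1, hyl⟩).ge
  · rw [hf m hm y hyr hy.2.le, add_sub_assoc, add_sub_assoc]
    have hc := sub_sq_le_sub_sq (s := 1 / ((m:ℝ) + 1)) (t := 1 / m)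
      (one_div_le_one_div_of_le (by linarith) (by linarith))
      (by linarith [one_div_le_one_div_of_le (by norm_num : (0:ℝ) < 3) hm3,
        one_div_le_one_div_of_le (by norm_num : (0:ℝ) < 3) (by linarith : (3:ℝ) ≤ m + 1)])
    rw [div_pow, div_pow, one_pow] at hc
    linarith

theorem IsStaircase.subdist_inv_le (hf : IsStaircase f) (hm : 3 ≤ m) :
    subdist (fun x => (f x : EReal)) (1 / m) ≤ ENNReal.ofReal (2 / m) := by
  have hgrad : HasFDerivAt (fun y : ℝ => y ^ 2 + (1 / ((m:ℝ) + 1) - 1 / ((m:ℝ) + 1) ^ 2))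
      (innerSL ℝ (2 / (m:ℝ))) (1 / m) := by
    refine ((hasDerivAt_pow 2 (1 / (m:ℝ))).add_const _).hasFDerivAt.congr_fderiv ?_
    ext
    simp [div_eq_mul_inv]
  have hmem := fsubd_subset_lsubd _ _ <| hgrad.mem_fsubd_of_le
    (by simpa only [add_sub_assoc] using hf.eventually_parabola_le hm)
    (by rw [hf.apply_inv (by omega), add_sub_assoc, div_pow, one_pow])
  refine (subdist_le_of_mem_lsubd hmem).trans_eq ?_
  rw [Real.enorm_eq_ofReal_abs, abs_of_nonneg (by positivity)]

theorem IsStaircase.apply_inv_mem_Ioc (hf : IsStaircase f) (hm : 3 ≤ m) :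
    f (1 / m) ∈ Set.Ioc (1 / ((m:ℝ) + 1)) (2 / m) := by
  have hm1 : (1:ℝ) ≤ m := by exact_mod_cast (by omega : 1 ≤ m)
  have hsq : 1 / ((m:ℝ) + 1) ^ 2 < 1 / (m:ℝ) ^ 2 :=
    one_div_lt_one_div_of_lt (by positivity) (by nlinarith)
  have hsq_le : 1 / (m:ℝ) ^ 2 ≤ 1 / m := one_div_le_one_div_of_le (by positivity) (by nlinarith)
  have hsucc : 1 / ((m:ℝ) + 1) ≤ 1 / m := one_div_le_one_div_of_le (by positivity) (by linarith)
  have hpos : 0 < 1 / ((m:ℝ) + 1) ^ 2 := by positivity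
  rw [hf.apply_inv (by omega)]
  constructor <;> linarith [show 2 / (m:ℝ) = 1 / m + 1 / m by ring]

theorem IsStaircase.tendsto_klQuotient (hf : IsStaircase f) {α : ℝ} (hα0 : 0 ≤ α)
    (hα1 : α < 1) :
    Tendsto (fun m : ℕ => ENNReal.ofReal (f (1 / m) ^ (-α)) *
      subdist (fun x => (f x : EReal)) (1 / m)) atTop (𝓝 0) := by
  have hbound : Tendsto (fun m : ℕ => ENNReal.ofReal (4 * ((m:ℝ) + 1) ^ (α - 1))) atTop (𝓝 0) := by
    have := (tendsto_rpow_neg_atTop (by linarith : 0 < 1 - α)).comp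
      (tendsto_atTop_add_const_right atTop 1 tendsto_natCast_atTop_atTop)
    simpa [Function.comp_def] using ENNReal.tendsto_ofReal (this.const_mul 4)
  refine tendsto_of_tendsto_of_tendsto_of_le_of_le' tendsto_const_nhds hbound
    (Eventually.of_forall fun _ => zero_le) ?_
  filter_upwards [eventually_ge_atTop 3] with m hm
  have hm3 : (3:ℝ) ≤ m := by exact_mod_cast hm
  have hm0 : (0:ℝ) < m := by positivity
  have hpow : f (1 / m) ^ (-α) ≤ ((m:ℝ) + 1) ^ α := calc
    f (1 / m) ^ (-α) ≤ (1 / ((m:ℝ) + 1)) ^ (-α) :=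
      Real.rpow_le_rpow_of_nonpos (by positivity) (hf.apply_inv_mem_Ioc hm).1.le (by linarith)
    _ = ((m:ℝ) + 1) ^ α := by
      rw [one_div, Real.inv_rpow (by positivity), Real.rpow_neg (by positivity), inv_inv]
  have hdiv : 2 / (m:ℝ) ≤ 4 / ((m:ℝ) + 1) := by
    rw [div_le_div_iff₀ hm0 (by positivity)]
    linarith
  calc _ ≤ ENNReal.ofReal (((m:ℝ) + 1) ^ α) * ENNReal.ofReal (2 / m) :=
        mul_le_mul' (ENNReal.ofReal_le_ofReal hpow) (hf.subdist_inv_le hm)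
    _ = ENNReal.ofReal (((m:ℝ) + 1) ^ α * (2 / m)) := (ENNReal.ofReal_mul (by positivity)).symm
    _ ≤ ENNReal.ofReal (((m:ℝ) + 1) ^ α * (4 / ((m:ℝ) + 1))) := by gcongr
    _ = ENNReal.ofReal (4 * ((m:ℝ) + 1) ^ (α - 1)) := by
      rw [Real.rpow_sub_one (by positivity)]
      ring_nf

end Staircase

theorem stmt16_general (f : ℝ → ℝ)
    (h1 : ∀ x ≤ (0:ℝ), f x = 0)
    (h2 : ∀ n : ℕ, 3 ≤ n → ∀ x : ℝ, 1 / (n:ℝ) < x → x ≤ 1 / ((n:ℝ) - 1) →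
      f x = x ^ 2 + 1 / (n:ℝ) - 1 / (n:ℝ) ^ 2) :
    ∀ α : ℝ, 0 ≤ α → α < 1 →
      (∀ μ > (0:ℝ), ¬ KLAt (fun x => (f x : EReal)) 0 α μ) ∧
      Tendsto (fun n : ℕ =>
          ENNReal.ofReal ((f (1 / ((n:ℝ) - 1)) - f 0) ^ (-α)) *
            subdist (fun x => (f x : EReal)) (1 / ((n:ℝ) - 1)))
        atTop (𝓝 0) := by
  intro α hα0 hα1
  have hf : IsStaircase f := h2
  have hf0 : f 0 = 0 := h1 0 le_rfl
  have hlim : Tendsto (fun m : ℕ => ENNReal.ofReal ((f (1 / m) - f 0) ^ (-α)) *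
      subdist (fun x => (f x : EReal)) (1 / m)) atTop (𝓝 0) := by
    simpa only [hf0, sub_zero] using hf.tendsto_klQuotient hα0 hα1
  have hpos : ∀ᶠ m : ℕ in atTop, 0 < f (1 / m) := by
    filter_upwards [eventually_ge_atTop 3] with m hm
    exact (by positivity : (0:ℝ) < 1 / ((m:ℝ) + 1)).trans (hf.apply_inv_mem_Ioc hm).1
  have hval : Tendsto (fun m : ℕ => f (1 / m)) atTop (𝓝 (f 0)) := by
    rw [hf0]
    refine tendsto_of_tendsto_of_tendsto_of_le_of_le' tendsto_const_nhds
      (tendsto_const_div_atTop_nhds_zero_nat 2) (hpos.mono fun _ h => h.le) ?_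
    filter_upwards [eventually_ge_atTop 3] with m hm using (hf.apply_inv_mem_Ioc hm).2
  refine ⟨fun μ _ => not_klAt_of_tendsto tendsto_one_div_atTop_nhds_zero_nat hval
    (by simpa only [hf0] using hpos) hlim, ?_⟩
  rw [← tendsto_add_atTop_iff_nat 1]
  simpa only [Nat.cast_add_one, add_sub_cancel_right] using hlim

theorem stmt16 (f : ℝ → ℝ)
    (h1 : ∀ x ≤ (0:ℝ), f x = 0)
    (h2 : ∀ n : ℕ, 3 ≤ n → ∀ x : ℝ, 1 / (n:ℝ) < x → x ≤ 1 / ((n:ℝ) - 1) →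
      f x = x ^ 2 + 1 / (n:ℝ) - 1 / (n:ℝ) ^ 2)
    (h3 : ∀ x > (1/2 : ℝ), f x = x ^ 2 + 1/4) :
    ∀ α : ℝ, 0 ≤ α → α < 1 →
      (∀ μ > (0:ℝ), ¬ KLAt (fun x => (f x : EReal)) 0 α μ) ∧
      Tendsto (fun n : ℕ =>
          ENNReal.ofReal ((f (1 / ((n:ℝ) - 1)) - f 0) ^ (-α)) *
            subdist (fun x => (f x : EReal)) (1 / ((n:ℝ) - 1)))
        atTop (𝓝 0) :=
  stmt16_general f h1 h2

end
end
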